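/- Let 𝒜 and 𝒜̃ be sub-σ-algebras of ℱ and B ∈ 𝒜 ∩ 𝒜̃ an event such that 𝒜 ∩ B = 𝒜̃ ∩ B (the traces of the two σ-algebras on B coincide). Then for any integrable random variable X, 1_B · E[X | 𝒜] = 1_B · E[X | 𝒜̃] almost surely. -/
import Mathlib


open MeasureTheory

/-- if `B ∈ 𝒜 ∩ 𝒜̃` and the traces of `𝒜` and `𝒜̃` on `B` coincide,
then `1_B E[X | 𝒜] = 1_B E[X | 𝒜̃]` a.s. for every integrable `X`. -/
theorem stmt5 {Ω : Type*} {m : MeasurableSpace Ω} {μ : Measure Ω} [IsProbabilityMeasure μ]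
    (𝒜 𝒜' : MeasurableSpace Ω) (h𝒜 : 𝒜 ≤ m) (h𝒜' : 𝒜' ≤ m)
    (B : Set Ω) (hB : MeasurableSet[𝒜] B) (hB' : MeasurableSet[𝒜'] B)
    (htrace : {S : Set Ω | ∃ A, MeasurableSet[𝒜] A ∧ S = A ∩ B} =
      {S : Set Ω | ∃ A, MeasurableSet[𝒜'] A ∧ S = A ∩ B})
    (X : Ω → ℝ) (hX : Integrable X μ) :
    B.indicator (μ[X | 𝒜]) =ᵐ[μ] B.indicator (μ[X | 𝒜']) := by
  letI : MeasurableSpace Ω := m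
  have hBm : MeasurableSet[m] B := h𝒜 _ hB
  set Z : Ω → ℝ := B.indicator X with hZ
  have hZint : Integrable Z μ := hX.indicator hBm
  set W : Ω → ℝ := μ[Z | 𝒜] with hW
  -- `Z = 1_B Z`
  have hZB : B.indicator Z = Z := by
    rw [hZ, Set.indicator_indicator, Set.inter_self]
  -- `W =ᵐ 1_B W`
  have hWB : W =ᵐ[μ] B.indicator W := by
    have := condExp_indicator (m := 𝒜) (μ := μ) hZint hB
    rwa [hZB] at this
  -- the trace σ-algebra fact: `B ∩ W ⁻¹' s` is `𝒜'`-measurable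
  have key : ∀ s : Set ℝ, MeasurableSet s → MeasurableSet[𝒜'] (B ∩ W ⁻¹' s) := by
    intro s hs
    have hWs : MeasurableSet[𝒜] (W ⁻¹' s) :=
      (stronglyMeasurable_condExp (m := 𝒜)).measurable hs
    have hmem : (W ⁻¹' s) ∩ B ∈ {S : Set Ω | ∃ A, MeasurableSet[𝒜] A ∧ S = A ∩ B} :=
      ⟨W ⁻¹' s, hWs, rfl⟩
    rw [htrace] at hmem
    obtain ⟨A, hA, hAeq⟩ := hmem
    have : B ∩ W ⁻¹' s = A ∩ B := by rw [Set.inter_comm]; exact hAeq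
    rw [this]
    exact hA.inter hB'
  -- `1_B W` is `𝒜'`-measurable
  have hBWmeas : Measurable[𝒜'] (B.indicator W) := by
    intro s hs
    by_cases h0 : (0 : ℝ) ∈ s
    · have : (B.indicator W) ⁻¹' s = (B ∩ W ⁻¹' s) ∪ Bᶜ := by
        ext x
        by_cases hx : x ∈ B <;>
          simp [Set.indicator_of_mem, Set.indicator_of_notMem, hx, h0]
      rw [this]
      exact (key s hs).union hB'.compl
    · have : (B.indicator W) ⁻¹' s = B ∩ W ⁻¹' s := by
        ext x
        by_cases hx : x ∈ B <;>
          simp [Set.indicator_of_mem, Set.indicator_of_notMem, hx, h0]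
      rw [this]
      exact key s hs
  -- main claim: `μ[Z|𝒜] =ᵐ μ[Z|𝒜']`
  have claim : W =ᵐ[μ] μ[Z | 𝒜'] := by
    refine ae_eq_condExp_of_forall_setIntegral_eq h𝒜' hZint
      (fun s _ _ => integrable_condExp.integrableOn) (fun s hs _ => ?_)
      ⟨B.indicator W, hBWmeas.stronglyMeasurable, hWB⟩
    have hsm : MeasurableSet[m] s := h𝒜' _ hs
    -- rewrite the left integral using `W =ᵐ 1_B W`
    have h1 : ∫ x in s, W x ∂μ = ∫ x in s ∩ B, W x ∂μ := by
      rw [setIntegral_congr_ae (μ := μ) hsm (hWB.mono fun x hx _ => hx),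
        setIntegral_indicator hBm]
    -- rewrite the right integral similarly
    have h2 : ∫ x in s, Z x ∂μ = ∫ x in s ∩ B, Z x ∂μ := by
      conv_lhs => rw [← hZB]
      rw [setIntegral_indicator hBm]
    rw [h1, h2]
    -- use the trace hypothesis to replace `s ∩ B` by an `𝒜`-measurable set
    have hmem : s ∩ B ∈ {S : Set Ω | ∃ A, MeasurableSet[𝒜'] A ∧ S = A ∩ B} := ⟨s, hs, rfl⟩
    rw [← htrace] at hmem
    obtain ⟨A, hA, hAeq⟩ := hmem
    rw [hAeq]
    exact setIntegral_condExp h𝒜 hZint (hA.inter hB)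
  calc B.indicator (μ[X | 𝒜]) =ᵐ[μ] μ[Z | 𝒜] := (condExp_indicator hX hB).symm
    _ =ᵐ[μ] μ[Z | 𝒜'] := claim
    _ =ᵐ[μ] B.indicator (μ[X | 𝒜']) := condExp_indicator hX hB'
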